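/- arXiv:1905.09601 — 3 statements merged into one kernel-verified Lean document; each statement's English description precedes it below -/
import Mathlib

section
/- Let γ : ℝ → ℝ^d be a curve such that |γ(s) - γ(t)| depends only on s - t (i.e., there is a function ρ with |γ(s)-γ(t)| = ρ(s-t) for all s,t). If γ is injective, Lipschitz, and parametrized by arclength, then the measure μ = H¹ restricted to the image of γ is uniformly distributed: μ(B(γ(t), r)) is independent of t for every r > 0. -/
open MeasureTheory Metric ENNReal

/-- If an injective arclength-parametrized Lipschitz curve has |γ(s)-γ(t)| depending
only on s-t, then H¹ restricted to its image is uniformly distributed. -/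
theorem stmt_10 {d : ℕ} (γ : ℝ → EuclideanSpace ℝ (Fin d)) (ρ : ℝ → ℝ)
    (hρ : ∀ s t : ℝ, ‖γ s - γ t‖ = ρ (s - t))
    (hinj : Function.Injective γ)
    (hlip : LipschitzWith 1 γ)
    (harc : ∀ s t : ℝ, s ≤ t → μH[1] (γ '' Set.Icc s t) = ENNReal.ofReal (t - s)) :
    ∃ f : ℝ → ℝ≥0∞, ∀ (t : ℝ) (r : ℝ), 0 < r →
      (μH[1] : Measure (EuclideanSpace ℝ (Fin d))).restrict (Set.range γ)
        (ball (γ t) r) = f r := by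
  -- Upper bound: the Lipschitz image does not increase one-dimensional measure.
  have lemA : ∀ S : Set ℝ, μH[1] (γ '' S) ≤ volume S := by
    intro S
    calc μH[1] (γ '' S) ≤ ((1 : NNReal) : ℝ≥0∞) ^ (1 : ℝ) * μH[1] S :=
          hlip.hausdorffMeasure_image_le (by norm_num) S
      _ = μH[1] S := by simp
      _ = volume S := by rw [MeasureTheory.hausdorffMeasure_real]
  -- Lower bound on compact sets.
  have lemB : ∀ K : Set ℝ, IsCompact K → volume K ≤ μH[1] (γ '' K) := by
    intro K hK
    obtain ⟨rad, hrad⟩ := hK.isBounded.subset_closedBall 0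
    set a : ℝ := -|rad|
    set b : ℝ := |rad|
    have hab : a ≤ b := (neg_abs_le rad).trans (le_abs_self rad)
    have hKsub : K ⊆ Set.Icc a b := by
      refine hrad.trans ?_
      rw [Real.closedBall_eq_Icc]
      exact Set.Icc_subset_Icc (by simp [a]; exact le_abs_self rad) (by simp [b]; exact le_abs_self rad)
    have hKm : MeasurableSet K := hK.measurableSet
    set c : ℝ≥0∞ := volume (Set.Icc a b \ K) with hc
    have hcfin : c ≠ ⊤ :=
      ((measure_mono Set.diff_subset).trans_lt (isCompact_Icc.measure_lt_top)).ne
    have hsplit : volume K + c = volume (Set.Icc a b) := by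
      rw [hc, ← measure_union Set.disjoint_sdiff_right (measurableSet_Icc.diff hKm),
        Set.union_diff_cancel hKsub]
    have himg : μH[1] (γ '' Set.Icc a b) ≤ μH[1] (γ '' K) + c :=
      calc μH[1] (γ '' Set.Icc a b)
          = μH[1] (γ '' K ∪ γ '' (Set.Icc a b \ K)) := by
            rw [← Set.image_union, Set.union_diff_cancel hKsub]
        _ ≤ μH[1] (γ '' K) + μH[1] (γ '' (Set.Icc a b \ K)) := measure_union_le _ _
        _ ≤ μH[1] (γ '' K) + c := add_le_add_right (lemA _) _
    have hIcc : μH[1] (γ '' Set.Icc a b) = volume (Set.Icc a b) := by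
      rw [harc a b hab, Real.volume_Icc]
    have : volume K + c ≤ μH[1] (γ '' K) + c := by
      rw [hsplit, ← hIcc]; exact himg
    exact (ENNReal.add_le_add_iff_right hcfin).mp this
  refine ⟨fun r => volume (γ ⁻¹' ball (γ 0) r), fun t r hr => ?_⟩
  set U : Set ℝ := γ ⁻¹' ball (γ t) r with hUdef
  have hUopen : IsOpen U := isOpen_ball.preimage hlip.continuous
  rw [Measure.restrict_apply measurableSet_ball]
  have himg_eq : ball (γ t) r ∩ Set.range γ = γ '' U := by
    rw [hUdef, Set.image_preimage_eq_inter_range]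
  rw [himg_eq]
  have hge : volume U ≤ μH[1] (γ '' U) := by
    refine le_of_forall_lt fun c hc => ?_
    obtain ⟨K, hKU, hKc, hcK⟩ := hUopen.exists_lt_isCompact hc
    exact hcK.trans_le ((lemB K hKc).trans (measure_mono (Set.image_mono hKU)))
  have hμ : μH[1] (γ '' U) = volume U := le_antisymm (lemA U) hge
  rw [hμ]
  have hUeq : U = (fun s => s + (-t)) ⁻¹' (γ ⁻¹' ball (γ 0) r) := by
    ext s
    simp only [hUdef, Set.mem_preimage, mem_ball, dist_eq_norm, hρ]
    rw [sub_eq_add_neg, sub_zero]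
  rw [hUeq, measure_preimage_add_right]
end

section
/- Let γ(t) = (r cos(αt), r sin(αt), bt) be a helix in ℝ³ with r > 0, α ≠ 0, b ≠ 0, and let γ̃(t) = v + γ(t) be its translate by a nonzero vector v = (v₁, v₂, 0) orthogonal to the axis. Then the distance from γ(t) to the image of γ̃ is not constant in t unless v = 0; i.e., if dist(γ(t), image(γ̃)) is the same for all t ∈ ℝ, then v = 0. -/
open Metric

set_option maxHeartbeats 2000000

/-- Two parallel-axis translates of a helix in ℝ³ at positive axis distance cannot have
dist(γ(t), image γ̃) constant in t: if the distance is constant then v = 0. -/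
theorem stmt_18 (r α b : ℝ) (hr : 0 < r) (hα : α ≠ 0) (hb : b ≠ 0)
    (γ : ℝ → EuclideanSpace ℝ (Fin 3))
    (hγ : ∀ t, γ t = ![r * Real.cos (α * t), r * Real.sin (α * t), b * t])
    (v : EuclideanSpace ℝ (Fin 3)) (hv : v 2 = 0)
    (hconst : ∀ t t' : ℝ,
      infDist (γ t) (Set.range fun u => v + γ u) =
      infDist (γ t') (Set.range fun u => v + γ u)) :
    v = 0 := by
  by_contra hne
  set v1 := v 0 with hv1
  set v2 := v 1 with hv2
  -- v nonzero means v1² + v2² > 0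
  have hρ2 : 0 < v1 ^ 2 + v2 ^ 2 := by
    rcases eq_or_ne v1 0 with h1 | h1
    · rcases eq_or_ne v2 0 with h2 | h2
      · exfalso; apply hne
        ext i
        fin_cases i
        · exact h1
        · exact h2
        · exact hv
      · have h2' : 0 < v2 ^ 2 := by positivity
        linarith only [sq_nonneg v1, h2']
    · have h1' : 0 < v1 ^ 2 := by positivity
      linarith only [sq_nonneg v2, h1']
  set ρ := Real.sqrt (v1 ^ 2 + v2 ^ 2) with hρdef
  have hρ : 0 < ρ := Real.sqrt_pos.mpr hρ2
  have hρsq : ρ ^ 2 = v1 ^ 2 + v2 ^ 2 := Real.sq_sqrt hρ2.le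
  -- distance formula
  have hdist : ∀ t u : ℝ, dist (γ t) (v + γ u) =
      Real.sqrt ((r * Real.cos (α * t) - (v1 + r * Real.cos (α * u))) ^ 2 +
        ((r * Real.sin (α * t) - (v2 + r * Real.sin (α * u))) ^ 2 +
          (b * t - (0 + b * u)) ^ 2)) := by
    intro t u
    rw [EuclideanSpace.dist_eq, Fin.sum_univ_three]
    have h0 : (γ t) 0 = r * Real.cos (α * t) := by rw [hγ]; rfl
    have h1 : (γ t) 1 = r * Real.sin (α * t) := by rw [hγ]; rfl
    have h2 : (γ t) 2 = b * t := by rw [hγ]; rfl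
    have g0 : (v + γ u) 0 = v1 + r * Real.cos (α * u) := by
      have : (v + γ u) 0 = v 0 + (γ u) 0 := rfl
      rw [this, hγ]; rfl
    have g1 : (v + γ u) 1 = v2 + r * Real.sin (α * u) := by
      have : (v + γ u) 1 = v 1 + (γ u) 1 := rfl
      rw [this, hγ]; rfl
    have g2 : (v + γ u) 2 = 0 + b * u := by
      have : (v + γ u) 2 = v 2 + (γ u) 2 := rfl
      rw [this, hγ, hv]; rfl
    rw [h0, h1, h2, g0, g1, g2]
    simp only [Real.dist_eq, sq_abs]
    ring_nf
  clear_value v1 v2 ρ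
  -- choose t_a with cos (α t_a) = -v1/ρ, sin (α t_a) = -v2/ρ
  obtain ⟨ta, hca, hsa⟩ : ∃ ta, Real.cos (α * ta) = -v1 / ρ ∧ Real.sin (α * ta) = -v2 / ρ := by
    set z : ℂ := ⟨-v1, -v2⟩ with hz
    have hzne : z ≠ 0 := by
      intro h
      have hre : (-v1 : ℝ) = 0 := congrArg Complex.re h
      have him : (-v2 : ℝ) = 0 := congrArg Complex.im h
      have h1 : v1 = 0 := by linarith only [hre]
      have h2 : v2 = 0 := by linarith only [him]
      rw [h1, h2] at hρ2
      norm_num at hρ2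
    have habs : ‖z‖ = ρ := by
      rw [Complex.norm_def, Complex.normSq_apply]
      simp only [hz]
      rw [hρdef]
      ring_nf
    refine ⟨Complex.arg z / α, ?_, ?_⟩
    · rw [mul_div_cancel₀ _ hα, Complex.cos_arg hzne, habs]
    · rw [mul_div_cancel₀ _ hα, Complex.sin_arg, habs]
  -- choose t_b with cos (α t_b) = -v2/ρ, sin (α t_b) = v1/ρ
  obtain ⟨tb, hcb, hsb⟩ : ∃ tb, Real.cos (α * tb) = -v2 / ρ ∧ Real.sin (α * tb) = v1 / ρ := by
    set z : ℂ := ⟨-v2, v1⟩ with hz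
    have hzne : z ≠ 0 := by
      intro h
      have hre : (-v2 : ℝ) = 0 := congrArg Complex.re h
      have him : (v1 : ℝ) = 0 := congrArg Complex.im h
      have h2 : v2 = 0 := by linarith only [hre]
      rw [him, h2] at hρ2
      norm_num at hρ2
    have habs : ‖z‖ = ρ := by
      rw [Complex.norm_def, Complex.normSq_apply]
      simp only [hz]
      rw [hρdef]
      ring_nf
    refine ⟨Complex.arg z / α, ?_, ?_⟩
    · rw [mul_div_cancel₀ _ hα, Complex.cos_arg hzne, habs]
    · rw [mul_div_cancel₀ _ hα, Complex.sin_arg, habs]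
  have hva : v1 = -ρ * Real.cos (α * ta) ∧ v2 = -ρ * Real.sin (α * ta) := by
    constructor
    · rw [hca]; field_simp
    · rw [hsa]; field_simp
  have hvb : v1 = ρ * Real.sin (α * tb) ∧ v2 = -ρ * Real.cos (α * tb) := by
    constructor
    · rw [hsb]; field_simp
    · rw [hcb]; field_simp
  set S := Set.range fun u => v + γ u with hS
  clear_value S
  -- Part A: infDist (γ ta) S ≥ ρ
  have hA : ρ ≤ infDist (γ ta) S := by
    by_contra hlt
    push_neg at hlt
    rw [hS, infDist_lt_iff (Set.range_nonempty _)] at hlt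
    obtain ⟨y, hy, hylt⟩ := hlt
    obtain ⟨u, rfl⟩ := hy
    have hge : ρ ≤ dist (γ ta) (v + γ u) := by
      rw [hdist ta u]
      rw [show ρ = Real.sqrt (ρ ^ 2) from (Real.sqrt_sq hρ.le).symm]
      apply Real.sqrt_le_sqrt
      have pca : Real.cos (α * ta) ^ 2 + Real.sin (α * ta) ^ 2 = 1 := by
        rw [add_comm]; exact Real.sin_sq_add_cos_sq _
      have pcu : Real.cos (α * u) ^ 2 + Real.sin (α * u) ^ 2 = 1 := by
        rw [add_comm]; exact Real.sin_sq_add_cos_sq _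
      obtain ⟨e1, e2⟩ := hva
      rw [e1, e2]
      have key : (r * Real.cos (α * ta) - (-ρ * Real.cos (α * ta) + r * Real.cos (α * u))) ^ 2 +
          ((r * Real.sin (α * ta) - (-ρ * Real.sin (α * ta) + r * Real.sin (α * u))) ^ 2 +
            (b * ta - (0 + b * u)) ^ 2) =
          ρ ^ 2 + r * (r + ρ) * ((Real.cos (α * ta) - Real.cos (α * u)) ^ 2 +
            (Real.sin (α * ta) - Real.sin (α * u)) ^ 2) + (b * ta - (0 + b * u)) ^ 2 := by
        linear_combination ((r + ρ) ^ 2 - r * (r + ρ)) * pca + (r ^ 2 - r * (r + ρ)) * pcu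
      rw [key]
      have hnn1 : 0 ≤ r * (r + ρ) * ((Real.cos (α * ta) - Real.cos (α * u)) ^ 2 +
          (Real.sin (α * ta) - Real.sin (α * u)) ^ 2) := by positivity
      have hnn2 : (0:ℝ) ≤ (b * ta - (0 + b * u)) ^ 2 := sq_nonneg _
      linarith only [hnn1, hnn2]
    exact absurd hylt (not_lt.mpr hge)
  -- Part B: find a point of S at distance < ρ from γ tb
  set K : ℝ := r ^ 2 + b ^ 2 / α ^ 2 with hK
  clear_value K
  have hKpos : 0 < K := by
    rw [hK]
    have h2 : 0 < b ^ 2 / α ^ 2 := by positivity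
    linarith only [sq_nonneg r, h2]
  set x : ℝ := min 1 (r * ρ / K) with hx
  have hx0 : 0 < x := lt_min one_pos (div_pos (mul_pos hr hρ) hKpos)
  have hx1 : x ≤ 1 := min_le_left _ _
  have hxK : K * x ≤ r * ρ := by
    have h := min_le_right 1 (r * ρ / K)
    have := mul_le_mul_of_nonneg_left h hKpos.le
    calc K * x ≤ K * (r * ρ / K) := this
    _ = r * ρ := by field_simp
  clear_value x
  clear hx
  set ub : ℝ := tb + x / α with hub
  have hαub : α * ub = α * tb + x := by rw [hub]; field_simp
  clear_value ub
  clear hub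
  have hB : dist (γ tb) (v + γ ub) < ρ := by
    rw [hdist tb ub]
    rw [show ρ = Real.sqrt (ρ ^ 2) from (Real.sqrt_sq hρ.le).symm]
    have hsum_nonneg : (0:ℝ) ≤ (r * Real.cos (α * tb) - (v1 + r * Real.cos (α * ub))) ^ 2 +
        ((r * Real.sin (α * tb) - (v2 + r * Real.sin (α * ub))) ^ 2 +
          (b * tb - (0 + b * ub)) ^ 2) := by positivity
    apply Real.sqrt_lt_sqrt hsum_nonneg
    -- compute the sum
    obtain ⟨e1, e2⟩ := hvb
    have pcb : Real.cos (α * tb) ^ 2 + Real.sin (α * tb) ^ 2 = 1 := by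
      rw [add_comm]; exact Real.sin_sq_add_cos_sq _
    have hcu : Real.cos (α * ub) = Real.cos (α * tb) * Real.cos x - Real.sin (α * tb) * Real.sin x := by
      rw [hαub, Real.cos_add]
    have hsu : Real.sin (α * ub) = Real.sin (α * tb) * Real.cos x + Real.cos (α * tb) * Real.sin x := by
      rw [hαub, Real.sin_add]
    have hlast : (b * tb - (0 + b * ub)) ^ 2 = b ^ 2 / α ^ 2 * x ^ 2 := by
      have hdiff : ub - tb = x / α := by
        have : α * ub - α * tb = x := by rw [hαub]; ring
        field_simp at this ⊢
        linarith only [this]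
      have : b * tb - (0 + b * ub) = -(b * (x / α)) := by rw [← hdiff]; ring
      rw [this]
      field_simp
    have hidentity : (r * Real.cos (α * tb) - (v1 + r * Real.cos (α * ub))) ^ 2 +
        ((r * Real.sin (α * tb) - (v2 + r * Real.sin (α * ub))) ^ 2 +
          (b * tb - (0 + b * ub)) ^ 2) =
        2 * r ^ 2 * (1 - Real.cos x) - 2 * r * ρ * Real.sin x + ρ ^ 2 +
          b ^ 2 / α ^ 2 * x ^ 2 := by
      have pC : Real.sin x ^ 2 + Real.cos x ^ 2 = 1 := Real.sin_sq_add_cos_sq x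
      rw [hlast, e1, e2, hcu, hsu]
      linear_combination (r ^ 2 * (1 - Real.cos x) ^ 2 + (r * Real.sin x - ρ) ^ 2) * pcb
        + r ^ 2 * pC
    rw [hidentity]
    -- trig bounds
    have hcos : 1 - Real.cos x ≤ x ^ 2 / 2 := by
      have := Real.one_sub_sq_div_two_le_cos (x := x)
      linarith only [this]
    have hx3 : x ^ 3 ≤ x := by
      have hprod : 0 ≤ x * (1 - x) * (1 + x) :=
        mul_nonneg (mul_nonneg hx0.le (by linarith only [hx1])) (by linarith only [hx0])
      have hid : x * (1 - x) * (1 + x) = x - x ^ 3 := by ring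
      linarith only [hid ▸ hprod]
    have hsin : 3 / 4 * x < Real.sin x := by
      have h := Real.sin_gt_sub_cube hx0
      linarith only [h, hx3, hx0]
    have h1 : 2 * r ^ 2 * (1 - Real.cos x) + b ^ 2 / α ^ 2 * x ^ 2 ≤ K * x ^ 2 := by
      have hb1 := mul_le_mul_of_nonneg_left hcos (by positivity : (0:ℝ) ≤ 2 * r ^ 2)
      rw [hK]
      calc 2 * r ^ 2 * (1 - Real.cos x) + b ^ 2 / α ^ 2 * x ^ 2
          ≤ 2 * r ^ 2 * (x ^ 2 / 2) + b ^ 2 / α ^ 2 * x ^ 2 := by linarith only [hb1]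
        _ = (r ^ 2 + b ^ 2 / α ^ 2) * x ^ 2 := by ring
    have h2 : K * x ^ 2 ≤ r * ρ * x := by
      have hm := mul_le_mul_of_nonneg_right hxK hx0.le
      calc K * x ^ 2 = K * x * x := by ring
      _ ≤ r * ρ * x := hm
    have h3 : r * ρ * x < 2 * r * ρ * Real.sin x := by
      have h4 := mul_lt_mul_of_pos_left hsin (show (0:ℝ) < 2 * r * ρ by positivity)
      have h5 : 0 < r * ρ * x := by positivity
      linarith only [h4, h5]
    linarith only [h1, h2, h3]
  -- conclude
  have hBi : infDist (γ tb) S < ρ := by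
    refine lt_of_le_of_lt ?_ hB
    rw [hS]
    exact infDist_le_dist_of_mem (Set.mem_range_self ub)
  have hc := hconst ta tb
  linarith only [hA, hBi, hc.ge, hc.le]
end

section
/- Let μ be the measure on ℝ³ given by μ = H¹ restricted to the union ⋃_{k∈ℤ} (γ + (0,0, kT/n)) ∪ ⋃_{k∈ℤ} (γ + (0,0, a + kT/n)), where γ(t) = (r cos(αt), r sin(αt), bt) is a helix with r > 0, α ≠ 0, b ≠ 0, T = 2πb/α is its vertical period, n ∈ ℕ, n ≥ 1, and a ∈ ℝ. Then μ is invariant under the screw motion S_s : (x,y,z) ↦ (x cos(αs) - y sin(αs), x sin(αs) + y cos(αs), z + bs) for every s ∈ ℝ, and the group generated by these screw motions together with the vertical translation by T/n acts transitively on spt(μ) when a ∈ (T/n)ℤ; in particular μ is then uniformly distributed. -/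
open MeasureTheory Metric ENNReal

noncomputable def sF19 (α b s : ℝ) (p : EuclideanSpace ℝ (Fin 3)) : EuclideanSpace ℝ (Fin 3) :=
  WithLp.toLp 2 ![p 0 * Real.cos (α * s) - p 1 * Real.sin (α * s),
    p 0 * Real.sin (α * s) + p 1 * Real.cos (α * s),
    p 2 + b * s]

lemma sF19_sF19 (α b s t : ℝ) (p : EuclideanSpace ℝ (Fin 3)) :
    sF19 α b s (sF19 α b t p) = sF19 α b (t + s) p := by
  ext i
  fin_cases i <;>
    simp [sF19, mul_add, Real.cos_add, Real.sin_add] <;> ring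

lemma sF19_zero (α b : ℝ) (p : EuclideanSpace ℝ (Fin 3)) : sF19 α b 0 p = p := by
  ext i
  fin_cases i <;> simp [sF19]

lemma sF19_isometry (α b s : ℝ) : Isometry (sF19 α b s) := by
  apply Isometry.of_dist_eq
  intro p q
  rw [EuclideanSpace.dist_eq, EuclideanSpace.dist_eq]
  congr 1
  rw [Fin.sum_univ_three, Fin.sum_univ_three]
  simp only [sF19, WithLp.ofLp_toLp, Matrix.cons_val_zero, Matrix.cons_val_one, Matrix.head_cons,
    Matrix.cons_val_two, Matrix.tail_cons, Real.dist_eq, sq_abs]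
  have h := Real.sin_sq_add_cos_sq (α * s)
  linear_combination ((p 0 - q 0) ^ 2 + (p 1 - q 1) ^ 2) * h

noncomputable def screwIso19 (α b s : ℝ) :
    EuclideanSpace ℝ (Fin 3) ≃ᵢ EuclideanSpace ℝ (Fin 3) where
  toFun := sF19 α b s
  invFun := sF19 α b (-s)
  left_inv p := by rw [sF19_sF19, add_neg_cancel, sF19_zero]
  right_inv p := by rw [sF19_sF19, neg_add_cancel, sF19_zero]
  isometry_toFun := sF19_isometry α b s

noncomputable def trIso19 (v : EuclideanSpace ℝ (Fin 3)) :
    EuclideanSpace ℝ (Fin 3) ≃ᵢ EuclideanSpace ℝ (Fin 3) where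
  toEquiv := Equiv.addRight v
  isometry_toFun := Isometry.of_dist_eq fun p q => dist_add_right p q v

/-- H¹ on the union of the translates of a helix by (0,0,kT/n) and (0,0,a+kT/n) is
invariant under every screw motion and under the vertical translation by T/n; when
a ∈ (T/n)ℤ the generated group acts transitively on the support, and then the measure
is uniformly distributed. -/
theorem stmt_19 (r α b a : ℝ) (hr : 0 < r) (hα : α ≠ 0) (hb : b ≠ 0)
    (n : ℕ) (hn : 1 ≤ n) (T : ℝ) (hT : T = 2 * Real.pi * b / α)
    (γ : ℝ → EuclideanSpace ℝ (Fin 3))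
    (hγ : ∀ t, γ t = ![r * Real.cos (α * t), r * Real.sin (α * t), b * t])
    (e : ℝ → EuclideanSpace ℝ (Fin 3)) (he : ∀ c, e c = ![0, 0, c])
    (S : Set (EuclideanSpace ℝ (Fin 3)))
    (hS : S = {x | ∃ (k : ℤ) (t : ℝ), x = γ t + e ((k : ℝ) * (T / n))} ∪
              {x | ∃ (k : ℤ) (t : ℝ), x = γ t + e (a + (k : ℝ) * (T / n))})
    (μ : Measure (EuclideanSpace ℝ (Fin 3))) (hμ : μ = μH[1].restrict S)
    (screw : ℝ → EuclideanSpace ℝ (Fin 3) → EuclideanSpace ℝ (Fin 3))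
    (hscrew : ∀ s p, screw s p =
      ![p 0 * Real.cos (α * s) - p 1 * Real.sin (α * s),
        p 0 * Real.sin (α * s) + p 1 * Real.cos (α * s),
        p 2 + b * s]) :
    (∀ s : ℝ, Measure.map (screw s) μ = μ) ∧
    (Measure.map (fun p => p + e (T / n)) μ = μ) ∧
    ((∃ m : ℤ, a = (m : ℝ) * (T / n)) →
      (∀ x ∈ S, ∀ y ∈ S, ∃ (s : ℝ) (k : ℤ),
        screw s x + e ((k : ℝ) * (T / n)) = y) ∧
      ∃ f : ℝ → ℝ≥0∞, ∀ x ∈ S, ∀ ρ > 0, μ (ball x ρ) = f ρ) := by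
  -- coordinate projections are measurable
  have hm : ∀ i : Fin 3, Measurable fun x : EuclideanSpace ℝ (Fin 3) => x i := fun i =>
    (EuclideanSpace.proj (𝕜 := ℝ) i).continuous.measurable
  -- e is additive
  have eadd : ∀ c d : ℝ, e c + e d = e (c + d) := by
    intro c d; ext i; fin_cases i <;> simp [he, PiLp.add_apply]
  have e0 : e 0 = 0 := by
    ext i; fin_cases i <;> simp [he, PiLp.zero_apply]
  -- the key screw motion computation
  have key : ∀ (s t c : ℝ), screw s (γ t + e c) = γ (t + s) + e c := by
    intro s t c
    ext i
    rw [hscrew]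
    fin_cases i <;>
      simp [hγ, he, PiLp.add_apply, mul_add, Real.cos_add, Real.sin_add] <;> ring
  -- measurability of each translated helix
  have hm2 : ∀ c : ℝ, MeasurableSet {x : EuclideanSpace ℝ (Fin 3) | ∃ t, x = γ t + e c} := by
    intro c
    have hset : {x : EuclideanSpace ℝ (Fin 3) | ∃ t, x = γ t + e c} =
        {x : EuclideanSpace ℝ (Fin 3) | x 0 = r * Real.cos (α / b * (x 2 - c))} ∩
        {x : EuclideanSpace ℝ (Fin 3) | x 1 = r * Real.sin (α / b * (x 2 - c))} := by
      ext x
      simp only [Set.mem_setOf_eq, Set.mem_inter_iff]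
      constructor
      · rintro ⟨t, rfl⟩
        have h2 : α / b * ((γ t + e c) 2 - c) = α * t := by
          simp only [PiLp.add_apply]
          rw [hγ, he]
          simp only [Matrix.cons_val_two, Matrix.tail_cons, Matrix.head_cons]
          field_simp
          ring
        rw [h2]
        constructor <;>
          · simp only [PiLp.add_apply]
            rw [hγ, he]
            simp
      · rintro ⟨h0, h1⟩
        refine ⟨(x 2 - c) / b, ?_⟩
        have harg : α * ((x 2 - c) / b) = α / b * (x 2 - c) := by
          ring
        ext i
        fin_cases i
        · show x 0 = (γ ((x 2 - c) / b) + e c) 0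
          simp only [PiLp.add_apply]
          rw [hγ, he]
          simp only [Matrix.cons_val_zero]
          rw [harg, add_zero]
          exact h0
        · show x 1 = (γ ((x 2 - c) / b) + e c) 1
          simp only [PiLp.add_apply]
          rw [hγ, he]
          simp only [Matrix.cons_val_one, Matrix.head_cons, Matrix.cons_val_zero]
          rw [harg, add_zero]
          exact h1
        · show x 2 = (γ ((x 2 - c) / b) + e c) 2
          simp only [PiLp.add_apply]
          rw [hγ, he]
          simp only [Matrix.cons_val_two, Matrix.tail_cons, Matrix.head_cons]
          field_simp
          ring
    rw [hset]
    exact (measurableSet_eq_fun (hm 0)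
        ((((hm 2).sub measurable_const).const_mul (α / b)).cos.const_mul r)).inter
      (measurableSet_eq_fun (hm 1)
        ((((hm 2).sub measurable_const).const_mul (α / b)).sin.const_mul r))
  -- S is measurable
  have hSm : MeasurableSet S := by
    rw [hS]
    have h1 : {x : EuclideanSpace ℝ (Fin 3) | ∃ (k : ℤ) (t : ℝ), x = γ t + e ((k:ℝ) * (T/n))} =
        ⋃ k : ℤ, {x : EuclideanSpace ℝ (Fin 3) | ∃ t, x = γ t + e ((k:ℝ) * (T/n))} := by
      ext x; simp [Set.mem_iUnion]
    have h2 : {x : EuclideanSpace ℝ (Fin 3) | ∃ (k : ℤ) (t : ℝ), x = γ t + e (a + (k:ℝ) * (T/n))} =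
        ⋃ k : ℤ, {x : EuclideanSpace ℝ (Fin 3) | ∃ t, x = γ t + e (a + (k:ℝ) * (T/n))} := by
      ext x; simp [Set.mem_iUnion]
    rw [h1, h2]
    exact (MeasurableSet.iUnion fun k => hm2 _).union (MeasurableSet.iUnion fun k => hm2 _)
  -- invariance of μ under any isometric equivalence preserving S
  have inv : ∀ F : EuclideanSpace ℝ (Fin 3) ≃ᵢ EuclideanSpace ℝ (Fin 3),
      (⇑F) ⁻¹' S = S → Measure.map (⇑F) μ = μ := by
    intro F hF
    rw [hμ]
    conv_lhs => rw [← hF]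
    rw [← Measure.restrict_map F.continuous.measurable hSm, F.map_hausdorffMeasure]
  -- screw s agrees with the isometric equivalence
  have hfun : ∀ s : ℝ, screw s = ⇑(screwIso19 α b s) := by
    intro s; funext p; ext i; rw [hscrew]; rfl
  have htr : ∀ v : EuclideanSpace ℝ (Fin 3), ⇑(trIso19 v) = fun p => p + v := by
    intro v; funext p; rfl
  -- screw motions map S into S
  have mapS : ∀ (s : ℝ) x, x ∈ S → screw s x ∈ S := by
    intro s x hx
    rw [hS] at hx ⊢
    rcases hx with ⟨k, t, rfl⟩ | ⟨k, t, rfl⟩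
    · exact Or.inl ⟨k, t + s, (key s t _).symm ▸ rfl⟩
    · exact Or.inr ⟨k, t + s, (key s t _).symm ▸ rfl⟩
  have hpreS : ∀ s : ℝ, screw s ⁻¹' S = S := by
    intro s
    ext x
    constructor
    · intro hx
      have h1 : screw (-s) (screw s x) ∈ S := mapS _ _ hx
      have h2 : screw (-s) (screw s x) = x := by
        rw [hfun s, hfun (-s)]
        show sF19 α b (-s) (sF19 α b s x) = x
        rw [sF19_sF19, add_neg_cancel, sF19_zero]
      rwa [h2] at h1
    · exact mapS s x
  -- vertical translations by multiples of T/n map S into S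
  have mapT : ∀ (k : ℤ) x, x ∈ S → x + e ((k:ℝ) * (T/n)) ∈ S := by
    intro k x hx
    rw [hS] at hx ⊢
    rcases hx with ⟨j, t, rfl⟩ | ⟨j, t, rfl⟩
    · refine Or.inl ⟨j + k, t, ?_⟩
      rw [add_assoc, eadd]
      congr 2
      push_cast; ring
    · refine Or.inr ⟨j + k, t, ?_⟩
      rw [add_assoc, eadd]
      congr 2
      push_cast; ring
  have hpreT : ∀ k : ℤ, (fun p => p + e ((k:ℝ) * (T/n))) ⁻¹' S = S := by
    intro k
    ext x
    constructor
    · intro hx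
      have h1 := mapT (-k) _ hx
      have h2 : x + e ((k:ℝ) * (T/n)) + e (((-k : ℤ):ℝ) * (T/n)) = x := by
        rw [add_assoc, eadd]
        have h3 : (k:ℝ) * (T/n) + ((-k : ℤ):ℝ) * (T/n) = 0 := by push_cast; ring
        rw [h3, e0, add_zero]
      rwa [h2] at h1
    · exact mapT k x
  refine ⟨?_, ?_, ?_⟩
  · -- screw invariance
    intro s
    rw [hfun s]
    exact inv _ (by rw [← hfun s]; exact hpreS s)
  · -- translation invariance
    have h1 : (fun p : EuclideanSpace ℝ (Fin 3) => p + e (T/n)) = ⇑(trIso19 (e (T/n))) :=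
      (htr _).symm
    rw [h1]
    apply inv
    rw [← h1]
    have h2 : e (T/n) = e (((1 : ℤ):ℝ) * (T/n)) := by norm_num
    rw [h2]
    exact hpreT 1
  · -- transitivity and uniform distribution
    rintro ⟨m, hm'⟩
    have memS : ∀ x ∈ S, ∃ (j : ℤ) (t : ℝ), x = γ t + e ((j:ℝ) * (T/n)) := by
      intro x hx
      rw [hS] at hx
      rcases hx with ⟨k, t, rfl⟩ | ⟨k, t, rfl⟩
      · exact ⟨k, t, rfl⟩
      · refine ⟨m + k, t, ?_⟩
        congr 2
        rw [hm']; push_cast; ring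
    have trans : ∀ x ∈ S, ∀ y ∈ S, ∃ (s : ℝ) (k : ℤ),
        screw s x + e ((k:ℝ) * (T/n)) = y := by
      intro x hx y hy
      obtain ⟨j, t, hxe⟩ := memS x hx
      obtain ⟨j', u, hye⟩ := memS y hy
      refine ⟨u - t, j' - j, ?_⟩
      rw [hxe, hye, key, add_assoc, eadd]
      have hA : t + (u - t) = u := by ring
      have hB : (j:ℝ) * (T/n) + (((j' - j : ℤ)):ℝ) * (T/n) = (j':ℝ) * (T/n) := by
        push_cast; ring
      rw [hA, hB]
    refine ⟨trans, ?_⟩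
    set x₀ : EuclideanSpace ℝ (Fin 3) := γ 0 + e ((((0 : ℤ)):ℝ) * (T/n)) with hx₀def
    have hx₀ : x₀ ∈ S := by rw [hS]; exact Or.inl ⟨0, 0, rfl⟩
    refine ⟨fun ρ => μ (ball x₀ ρ), ?_⟩
    intro x hx ρ hρ
    obtain ⟨s, k, hg⟩ := trans x hx x₀ hx₀
    set G := (screwIso19 α b s).trans (trIso19 (e ((k:ℝ) * (T/n)))) with hGdef
    have hGc : ∀ p, G p = screw s p + e ((k:ℝ) * (T/n)) := by
      intro p
      have h1 : G p = trIso19 (e ((k:ℝ) * (T/n))) (screwIso19 α b s p) := rfl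
      rw [h1, ← hfun s]
      rfl
    have hGx : G x = x₀ := by rw [hGc]; exact hg
    have hmapG : Measure.map (⇑G) μ = μ := by
      apply inv
      have hco : ⇑G = (fun p => p + e ((k:ℝ) * (T/n))) ∘ (screw s) := by
        funext p; rw [Function.comp_apply, hGc]
      rw [hco, Set.preimage_comp, hpreT k, hpreS s]
    have hball : ball x ρ = ⇑G ⁻¹' ball x₀ ρ := by
      rw [G.preimage_ball]
      congr 1
      rw [← hGx, G.symm_apply_apply]
    rw [hball, ← Measure.map_apply G.continuous.measurable measurableSet_ball, hmapG]
end
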